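/- arXiv:1501.02138 — 2 statements merged into one kernel-verified Lean document; each statement's English description precedes it below -/
import Mathlib

section
/- Let d ≥ 7 be an integer. For every integer k with 2 ≤ k ≤ ⌊(d+1)/2⌋ − 3, one has C^d_{d−3,1} + C^d_{d−3,k} = − (d−2)(d−1)·d·(d−k−2)·(4k² − 2dk − 2k + d² − 5d + 6) / 24, and this quantity is negative. -/
/-- `coefC d r i` is the coefficient of `z^r` in the degree-`d` polynomial
`c_i(z) = (z+i)(z+i-1)⋯(z+i-(d-1))`. -/
noncomputable def coefC (d r : ℕ) (i : ℤ) : ℤ :=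
  (∏ j ∈ Finset.range d, (Polynomial.X + Polynomial.C (i - (j : ℤ)))).coeff r

/-- Stirling numbers of the first kind: `stirl n k` is the coefficient of `z^k` in
`∏_{j=0}^{n-1} (z - j)`. -/
noncomputable def stirl (n k : ℕ) : ℤ :=
  (∏ j ∈ Finset.range n, (Polynomial.X - Polynomial.C (j : ℤ))).coeff k

/-- `Mrd d r = min { C^d_{r,i} : 1 ≤ i ≤ d-2 }`. -/
noncomputable def Mrd (d r : ℕ) : ℤ :=
  sInf {x : ℤ | ∃ i : ℕ, 1 ≤ i ∧ i ≤ d - 2 ∧ x = coefC d r (i : ℤ)}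

/-- `Nrd d r = min { C^d_{r,i} : ⌈(d-1)/2⌉ ≤ i ≤ d-2 }`; note `⌈(d-1)/2⌉ = (d-1+1)/2`
in natural-number arithmetic. -/
noncomputable def Nrd (d r : ℕ) : ℤ :=
  sInf {x : ℤ | ∃ i : ℕ, (d - 1 + 1) / 2 ≤ i ∧ i ≤ d - 2 ∧ x = coefC d r (i : ℤ)}

open Polynomial

private noncomputable def Pq (d : ℕ) (x : ℚ) : ℚ[X] :=
  ∏ j ∈ Finset.range d, (X + C (x - (j : ℕ)))

private lemma Pq_monic (d : ℕ) (x : ℚ) : (Pq d x).Monic :=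
  monic_prod_of_monic _ _ (fun _ _ => monic_X_add_C _)

private lemma Pq_natDegree (d : ℕ) (x : ℚ) : (Pq d x).natDegree = d := by
  unfold Pq
  rw [natDegree_prod]
  · simp only [natDegree_X_add_C, Finset.sum_const, Finset.card_range, smul_eq_mul, mul_one]
  · intro i _; exact (monic_X_add_C _).ne_zero

private lemma Pq_coeff_self (d : ℕ) (x : ℚ) : (Pq d x).coeff d = 1 := by
  have := (Pq_monic d x).coeff_natDegree
  rwa [Pq_natDegree] at this

private lemma coeff_mul_XC (P : ℚ[X]) (c : ℚ) (m : ℕ) :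
    (P * (X + C c)).coeff (m + 1) = P.coeff m + c * P.coeff (m + 1) := by
  rw [mul_add, coeff_add, coeff_mul_X, coeff_mul_C]; ring

private lemma Pq_succ (d : ℕ) (x : ℚ) :
    Pq (d + 1) x = Pq d x * (X + C (x - (d : ℕ))) := by
  unfold Pq; rw [Finset.prod_range_succ]

/-- The three subleading coefficients of `Pq (n+3) x`. -/
private lemma Pq_coeffs (n : ℕ) (x : ℚ) :
    (Pq (n + 3) x).coeff (n + 2) =
      ((n : ℚ) + 3) * x - ((n : ℚ) + 3) * ((n : ℚ) + 2) / 2 ∧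
    (Pq (n + 3) x).coeff (n + 1) =
      x ^ 2 * (((n : ℚ) + 3) ^ 2 / 2 - ((n : ℚ) + 3) / 2) +
      x * (-((n : ℚ) + 3) ^ 3 / 2 + ((n : ℚ) + 3) ^ 2 - ((n : ℚ) + 3) / 2) +
      (((n : ℚ) + 3) ^ 4 / 8 - 5 * ((n : ℚ) + 3) ^ 3 / 12 +
        3 * ((n : ℚ) + 3) ^ 2 / 8 - ((n : ℚ) + 3) / 12) ∧
    (Pq (n + 3) x).coeff n =
      x ^ 3 * (((n : ℚ) + 3) ^ 3 / 6 - ((n : ℚ) + 3) ^ 2 / 2 + ((n : ℚ) + 3) / 3) +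
      x ^ 2 * (-((n : ℚ) + 3) ^ 4 / 4 + ((n : ℚ) + 3) ^ 3 -
        5 * ((n : ℚ) + 3) ^ 2 / 4 + ((n : ℚ) + 3) / 2) +
      x * (((n : ℚ) + 3) ^ 5 / 8 - 2 * ((n : ℚ) + 3) ^ 4 / 3 +
        29 * ((n : ℚ) + 3) ^ 3 / 24 - 5 * ((n : ℚ) + 3) ^ 2 / 6 + ((n : ℚ) + 3) / 6) +
      (-((n : ℚ) + 3) ^ 6 / 48 + 7 * ((n : ℚ) + 3) ^ 5 / 48 -
        17 * ((n : ℚ) + 3) ^ 4 / 48 + 17 * ((n : ℚ) + 3) ^ 3 / 48 -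
        ((n : ℚ) + 3) ^ 2 / 8) := by
  induction n with
  | zero =>
    have h1 : Pq 1 x = X + C (x - (0 : ℕ)) := by
      unfold Pq; rw [Finset.prod_range_one]
    have c10 : (Pq 1 x).coeff 0 = x := by simp [h1]
    have c11 : (Pq 1 x).coeff 1 = 1 := Pq_coeff_self 1 x
    have c12 : (Pq 1 x).coeff 2 = 0 := by
      apply coeff_eq_zero_of_natDegree_lt; rw [Pq_natDegree]; norm_num
    have h2 : Pq 2 x = Pq 1 x * (X + C (x - (1 : ℕ))) := Pq_succ 1 x
    have c20 : (Pq 2 x).coeff 0 = x * (x - 1) := by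
      rw [h2, mul_coeff_zero, c10]
      simp only [coeff_add, coeff_X_zero, coeff_C, if_pos rfl, zero_add]
      push_cast; ring
    have c21 : (Pq 2 x).coeff 1 = x + (x - 1) * 1 := by
      rw [h2]
      have := coeff_mul_XC (Pq 1 x) (x - (1 : ℕ)) 0
      rw [this, c10, c11]; norm_num
    have c22 : (Pq 2 x).coeff 2 = 1 := Pq_coeff_self 2 x
    have h3 : Pq 3 x = Pq 2 x * (X + C (x - (2 : ℕ))) := Pq_succ 2 x
    have c30 : (Pq 3 x).coeff 0 = (x - 2) * (x * (x - 1)) := by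
      rw [h3, mul_coeff_zero, c20]
      simp only [coeff_add, coeff_X_zero, coeff_C, if_pos rfl, zero_add]
      push_cast; ring
    have c31 : (Pq 3 x).coeff 1 = x * (x - 1) + (x - 2) * (x + (x - 1) * 1) := by
      rw [h3]
      have := coeff_mul_XC (Pq 2 x) (x - (2 : ℕ)) 0
      rw [this, c20, c21]; norm_num
    have c32 : (Pq 3 x).coeff 2 = (x + (x - 1) * 1) + (x - 2) * 1 := by
      rw [h3]
      have := coeff_mul_XC (Pq 2 x) (x - (2 : ℕ)) 1
      rw [this, c21, c22]; norm_num
    refine ⟨?_, ?_, ?_⟩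
    · rw [show (0 : ℕ) + 2 = 2 from rfl, c32]; push_cast; ring
    · rw [show (0 : ℕ) + 1 = 1 from rfl, c31]; push_cast; ring
    · rw [c30]; push_cast; ring
  | succ n ih =>
    obtain ⟨hA, hB, hC⟩ := ih
    have hstep : Pq (n + 4) x = Pq (n + 3) x * (X + C (x - ((n : ℕ) + 3 : ℕ))) := by
      have := Pq_succ (n + 3) x
      convert this using 3
    have hlead : (Pq (n + 3) x).coeff (n + 3) = 1 := Pq_coeff_self (n + 3) x
    have cA : (Pq (n + 4) x).coeff (n + 3) =
        (Pq (n + 3) x).coeff (n + 2) + (x - ((n : ℚ) + 3)) * 1 := by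
      rw [hstep]
      have := coeff_mul_XC (Pq (n + 3) x) (x - ((n : ℕ) + 3 : ℕ)) (n + 2)
      rw [show n + 2 + 1 = n + 3 from rfl] at this
      rw [this, hlead]; push_cast; ring
    have cB : (Pq (n + 4) x).coeff (n + 2) =
        (Pq (n + 3) x).coeff (n + 1) +
          (x - ((n : ℚ) + 3)) * (Pq (n + 3) x).coeff (n + 2) := by
      rw [hstep]
      have := coeff_mul_XC (Pq (n + 3) x) (x - ((n : ℕ) + 3 : ℕ)) (n + 1)
      rw [show n + 1 + 1 = n + 2 from rfl] at this
      rw [this]; push_cast; ring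
    have cC : (Pq (n + 4) x).coeff (n + 1) =
        (Pq (n + 3) x).coeff n +
          (x - ((n : ℚ) + 3)) * (Pq (n + 3) x).coeff (n + 1) := by
      rw [hstep]
      have := coeff_mul_XC (Pq (n + 3) x) (x - ((n : ℕ) + 3 : ℕ)) n
      rw [this]; push_cast; ring
    have hn : ((n + 1 : ℕ) : ℚ) + 3 = ((n : ℚ) + 3) + 1 := by push_cast; ring
    refine ⟨?_, ?_, ?_⟩
    · show (Pq (n + 4) x).coeff (n + 3) = _
      rw [cA, hA]; push_cast; ring
    · show (Pq (n + 4) x).coeff (n + 2) = _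
      rw [cB, hB, hA]; push_cast; ring
    · show (Pq (n + 4) x).coeff (n + 1) = _
      rw [cC, hC, hB]; push_cast; ring

private lemma coefC_cast (d r : ℕ) (i : ℤ) :
    ((coefC d r i : ℤ) : ℚ) = (Pq d (i : ℚ)).coeff r := by
  have hmap : (∏ j ∈ Finset.range d,
      (X + C (i - (j : ℤ)))).map (Int.castRingHom ℚ) = Pq d (i : ℚ) := by
    rw [Polynomial.map_prod]
    unfold Pq
    refine Finset.prod_congr rfl fun j _ => ?_
    rw [Polynomial.map_add, Polynomial.map_X, Polynomial.map_C]
    simp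
  unfold coefC
  rw [← hmap, coeff_map]
  simp

theorem stmt_12 (d : ℕ) (hd : 7 ≤ d) (k : ℕ) (hk1 : 2 ≤ k) (hk2 : k ≤ (d + 1) / 2 - 3) :
    (coefC d (d - 3) ((1 : ℕ) : ℤ) : ℚ) + (coefC d (d - 3) (k : ℤ) : ℚ) =
      -(((d : ℚ) - 2) * ((d : ℚ) - 1) * (d : ℚ) * ((d : ℚ) - (k : ℚ) - 2) *
          (4 * (k : ℚ) ^ 2 - 2 * (d : ℚ) * (k : ℚ) - 2 * (k : ℚ) + (d : ℚ) ^ 2 -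
            5 * (d : ℚ) + 6)) / 24 ∧
    (coefC d (d - 3) ((1 : ℕ) : ℤ) : ℚ) + (coefC d (d - 3) (k : ℤ) : ℚ) < 0 := by
  have hdk : 2 * k + 5 ≤ d := by omega
  obtain ⟨n, rfl⟩ : ∃ n, d = n + 3 := ⟨d - 3, by omega⟩
  have hr : n + 3 - 3 = n := by omega
  rw [hr, coefC_cast, coefC_cast]
  have h1 := (Pq_coeffs n (((1 : ℕ) : ℤ) : ℚ)).2.2
  have h2 := (Pq_coeffs n (((k : ℕ) : ℤ) : ℚ)).2.2
  have heq : (Pq (n + 3) (((1 : ℕ) : ℤ) : ℚ)).coeff n +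
      (Pq (n + 3) (((k : ℕ) : ℤ) : ℚ)).coeff n =
      -((((n + 3 : ℕ) : ℚ) - 2) * (((n + 3 : ℕ) : ℚ) - 1) * ((n + 3 : ℕ) : ℚ) *
          (((n + 3 : ℕ) : ℚ) - (k : ℚ) - 2) *
          (4 * (k : ℚ) ^ 2 - 2 * ((n + 3 : ℕ) : ℚ) * (k : ℚ) - 2 * (k : ℚ) +
            ((n + 3 : ℕ) : ℚ) ^ 2 - 5 * ((n + 3 : ℕ) : ℚ) + 6)) / 24 := by
    rw [h1, h2]; push_cast; ring
  refine ⟨heq, ?_⟩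
  rw [heq]
  have hK : (2 : ℚ) ≤ (k : ℚ) := by exact_mod_cast hk1
  have hD : 2 * (k : ℚ) + 5 ≤ ((n + 3 : ℕ) : ℚ) := by exact_mod_cast hdk
  set D : ℚ := ((n + 3 : ℕ) : ℚ) with hDdef
  set K : ℚ := (k : ℚ) with hKdef
  have hq : 0 < 4 * K ^ 2 - 2 * D * K - 2 * K + D ^ 2 - 5 * D + 6 := by
    nlinarith [sq_nonneg (D - 2 * K - 5), mul_nonneg (by linarith : (0:ℚ) ≤ D - 2*K - 5) (by linarith : (0:ℚ) ≤ K)]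
  have hfac : 0 < (D - 2) * (D - 1) * D * (D - K - 2) := by
    have : (0:ℚ) < D - K - 2 := by linarith
    have h2 : (0:ℚ) < D - 2 := by linarith
    have h3 : (0:ℚ) < D - 1 := by linarith
    have h4 : (0:ℚ) < D := by linarith
    positivity
  have : 0 < (D - 2) * (D - 1) * D * (D - K - 2) *
      (4 * K ^ 2 - 2 * D * K - 2 * K + D ^ 2 - 5 * D + 6) := mul_pos hfac hq
  linarith
end

section
/- Let d ≥ 8 be an even integer. Then C^d_{d−3,1} + C^d_{d−3,d/2−2} = − (d−2)·d²·(d−1)·(d² − 10d + 26) / 48, and this quantity is negative. -/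
open Polynomial Finset

private lemma coeff_step (p : Polynomial ℤ) (c : ℤ) (k : ℕ) :
    (p * (X + C c)).coeff (k + 1) = p.coeff k + c * p.coeff (k + 1) := by
  rw [mul_add, coeff_add, coeff_mul_X, coeff_mul_C]; ring

private lemma coeff_top (a : ℤ) (d : ℕ) :
    (∏ j ∈ Finset.range d, (X + C (a - (j : ℤ)))).coeff d = 1 := by
  have hm : (∏ j ∈ Finset.range d, (X + C (a - (j : ℤ)))).Monic :=
    monic_prod_of_monic _ _ (fun j _ => monic_X_add_C _)
  have hdeg : (∏ j ∈ Finset.range d, (X + C (a - (j : ℤ)))).natDegree = d := by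
    rw [natDegree_prod_of_monic _ _ (fun j _ => monic_X_add_C _)]
    simp only [natDegree_X_add_C, Finset.sum_const, Finset.card_range, smul_eq_mul, mul_one]
  have := hm.coeff_natDegree
  rwa [hdeg] at this

private def P1 (D A : ℚ) : ℚ := D * A - D * (D - 1) / 2
private def P2 (D A : ℚ) : ℚ := D * A ^ 2 - A * D * (D - 1) + (D - 1) * D * (2 * D - 1) / 6
private def P3 (D A : ℚ) : ℚ :=
  D * A ^ 3 - 3 * A ^ 2 * D * (D - 1) / 2 + A * (D - 1) * D * (2 * D - 1) / 2
    - (D * (D - 1) / 2) ^ 2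
private def E2 (D A : ℚ) : ℚ := (P1 D A ^ 2 - P2 D A) / 2
private def E3 (D A : ℚ) : ℚ :=
  (P1 D A ^ 3 - 3 * P1 D A * P2 D A + 2 * P3 D A) / 6

private lemma key (a : ℤ) : ∀ n : ℕ,
    (((∏ j ∈ Finset.range (n + 3), (X + C (a - (j : ℤ)))).coeff (n + 2) : ℤ) : ℚ)
        = P1 ((n : ℚ) + 3) (a : ℚ) ∧
    (((∏ j ∈ Finset.range (n + 3), (X + C (a - (j : ℤ)))).coeff (n + 1) : ℤ) : ℚ)
        = E2 ((n : ℚ) + 3) (a : ℚ) ∧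
    (((∏ j ∈ Finset.range (n + 3), (X + C (a - (j : ℤ)))).coeff n : ℤ) : ℚ)
        = E3 ((n : ℚ) + 3) (a : ℚ) := by
  intro n
  induction n with
  | zero =>
      have hprod : (∏ j ∈ Finset.range 3, (X + C (a - (j : ℤ))))
          = X ^ 3 + C (3 * a - 3) * X ^ 2 + C (3 * a ^ 2 - 6 * a + 2) * X
            + C (a ^ 3 - 3 * a ^ 2 + 2 * a) := by
        rw [show (3:ℕ) = 2 + 1 from rfl, Finset.prod_range_succ,
          Finset.prod_range_succ, Finset.prod_range_one]
        simp only [Nat.cast_zero, Nat.cast_one, Nat.cast_ofNat, sub_zero,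
          map_sub, map_add, map_mul, map_pow, map_ofNat, C_1]
        ring
      refine ⟨?_, ?_, ?_⟩ <;>
        · rw [hprod]
          simp only [coeff_add, coeff_C_mul, coeff_X_pow, coeff_X, coeff_C]
          norm_num [P1, E2, E3, P2, P3] <;> (push_cast; ring)
  | succ n ih =>
      obtain ⟨h1, h2, h3⟩ := ih
      have hsplit : (∏ j ∈ Finset.range (n + 1 + 3), (X + C (a - (j : ℤ))))
          = (∏ j ∈ Finset.range (n + 3), (X + C (a - (j : ℤ)))) * (X + C (a - ((n:ℤ) + 3))) := by
        rw [show n + 1 + 3 = (n + 3) + 1 from rfl, Finset.prod_range_succ]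
        push_cast; ring_nf
      have htop := coeff_top a (n + 3)
      refine ⟨?_, ?_, ?_⟩
      · rw [hsplit, show n + 1 + 2 = (n + 2) + 1 from rfl, coeff_step,
          show n + 2 + 1 = n + 3 from rfl, htop]
        push_cast
        rw [h1]
        simp only [P1]
        push_cast
        ring
      · rw [hsplit, show n + 1 + 1 = (n + 1) + 1 from rfl, coeff_step]
        push_cast
        rw [h1, h2]
        simp only [P1, E2, P2]
        push_cast
        ring
      · rw [hsplit, coeff_step]
        push_cast
        rw [h2, h3]
        simp only [P1, E2, E3, P2, P3]
        push_cast
        ring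

theorem stmt_14 (d : ℕ) (hd : 8 ≤ d) (heven : Even d) :
    (coefC d (d - 3) ((1 : ℕ) : ℤ) : ℚ) + (coefC d (d - 3) ((d / 2 - 2 : ℕ) : ℤ) : ℚ) =
      -(((d : ℚ) - 2) * (d : ℚ) ^ 2 * ((d : ℚ) - 1) *
          ((d : ℚ) ^ 2 - 10 * (d : ℚ) + 26)) / 48 ∧
    (coefC d (d - 3) ((1 : ℕ) : ℤ) : ℚ) + (coefC d (d - 3) ((d / 2 - 2 : ℕ) : ℤ) : ℚ) < 0 := by
  obtain ⟨m, hm⟩ := heven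
  have hm4 : 4 ≤ m := by omega
  have hn : d - 3 + 3 = d := by omega
  have hcoef : ∀ a : ℤ, (coefC d (d - 3) a : ℚ) = E3 (((d - 3 : ℕ) : ℚ) + 3) (a : ℚ) := by
    intro a
    have := (key a (d - 3)).2.2
    rw [hn] at this
    exact this
  have hhalf : ((d / 2 - 2 : ℕ) : ℤ) = (m : ℤ) - 2 := by
    have : d / 2 = m := by omega
    rw [this]
    omega
  have hd3 : ((d - 3 : ℕ) : ℚ) = (m : ℚ) + (m : ℚ) - 3 := by
    have : (d : ℚ) = (m : ℚ) + (m : ℚ) := by exact_mod_cast congrArg (Nat.cast : ℕ → ℚ) hm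
    push_cast [Nat.cast_sub (by omega : 3 ≤ d)]
    linarith
  have hdq : (d : ℚ) = (m : ℚ) + (m : ℚ) := by exact_mod_cast congrArg (Nat.cast : ℕ → ℚ) hm
  have heq : (coefC d (d - 3) ((1 : ℕ) : ℤ) : ℚ) + (coefC d (d - 3) ((d / 2 - 2 : ℕ) : ℤ) : ℚ) =
      -(((d : ℚ) - 2) * (d : ℚ) ^ 2 * ((d : ℚ) - 1) *
          ((d : ℚ) ^ 2 - 10 * (d : ℚ) + 26)) / 48 := by
    rw [hcoef, hcoef, hhalf, hd3, hdq]
    simp only [E3, P1, P2, P3]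
    push_cast
    ring
  refine ⟨heq, ?_⟩
  rw [heq]
  have hd8 : (8 : ℚ) ≤ (d : ℚ) := by exact_mod_cast hd
  have h1 : (0:ℚ) < (d:ℚ) - 2 := by linarith
  have h2 : (0:ℚ) < (d:ℚ) - 1 := by linarith
  have h3 : (0:ℚ) < (d:ℚ) ^ 2 := by nlinarith
  have h4 : (0:ℚ) < (d:ℚ) ^ 2 - 10 * (d:ℚ) + 26 := by nlinarith [sq_nonneg ((d:ℚ) - 5)]
  have hpos : (0:ℚ) < ((d : ℚ) - 2) * (d : ℚ) ^ 2 * ((d : ℚ) - 1) *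
      ((d : ℚ) ^ 2 - 10 * (d : ℚ) + 26) := by positivity
  have : (0:ℚ) < (((d : ℚ) - 2) * (d : ℚ) ^ 2 * ((d : ℚ) - 1) *
      ((d : ℚ) ^ 2 - 10 * (d : ℚ) + 26)) / 48 := by positivity
  linarith
end
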